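/- arXiv:1009.4679 — 3 statements merged into one kernel-verified Lean document; each statement's English description precedes it below -/
import Mathlib

section
/- Let s, s₁, t be points in the plane, with s₁ ≠ s, such that the angle between t - s and s₁ - s is at most π/3 and |s₁ - s| ≤ |t - s|/2. Then |t - s| - |t - s₁| ≥ (2 - √3)·|s₁ - s|. -/
/-!
Put `x = t - s` and `y = s₁ - s`, so `t - s₁ = x - y`. An angle of at most `π/3` gives
`⟪x, y⟫ ≥ ‖x‖‖y‖/2`, hence by the law of cosines `‖x - y‖² ≤ d² - d a + a²` with `d = ‖x‖`,
`a = ‖y‖`. Writing `c = 2 - √3`, one has `(d - c a)² - (d² - d a + a²) = (2√3 - 3) a (d - 2a)`,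
which is nonnegative as soon as `2a ≤ d`.
-/

open Real InnerProductGeometry

section

variable {V : Type*} [NormedAddCommGroup V] [InnerProductSpace ℝ V]

lemma cos_mul_norm_mul_norm_le_inner_of_angle_le {x y : V} {θ : ℝ}
    (hθ : θ ≤ π) (hangle : angle x y ≤ θ) : cos θ * (‖x‖ * ‖y‖) ≤ inner ℝ x y := by
  rw [← cos_angle_mul_norm_mul_norm]
  gcongr
  exact cos_le_cos_of_nonneg_of_le_pi (angle_nonneg x y) hθ hangle

lemma norm_sub_sq_le_of_angle_le_pi_div_three {x y : V} (hangle : angle x y ≤ π / 3) :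
    ‖x - y‖ ^ 2 ≤ ‖x‖ ^ 2 - ‖x‖ * ‖y‖ + ‖y‖ ^ 2 := by
  have hinner := cos_mul_norm_mul_norm_le_inner_of_angle_le (by linarith [pi_pos]) hangle
  rw [cos_pi_div_three] at hinner
  rw [norm_sub_sq_real]
  linarith

end

lemma sqrt_sq_sub_mul_add_sq_le {a d : ℝ} (ha : 0 ≤ a) (had : 2 * a ≤ d) :
    √(d ^ 2 - d * a + a ^ 2) ≤ d - (2 - √3) * a := by
  have h3 : √3 ^ 2 = 3 := sq_sqrt (by norm_num)
  have hlt : √3 < 2 := by nlinarith [sqrt_nonneg 3]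
  have hge : 3 / 2 ≤ √3 := by nlinarith [sqrt_nonneg 3]
  have hgap : 0 ≤ (2 * √3 - 3) * (a * (d - 2 * a)) :=
    mul_nonneg (by linarith) (mul_nonneg ha (by linarith))
  apply sqrt_le_iff.mpr
  constructor <;> nlinarith

theorem stmt1_general (s s₁ t : EuclideanSpace ℝ (Fin 2))
    (hangle : InnerProductGeometry.angle (t - s) (s₁ - s) ≤ π / 3)
    (hlen : ‖s₁ - s‖ ≤ ‖t - s‖ / 2) :
    ‖t - s‖ - ‖t - s₁‖ ≥ (2 - Real.sqrt 3) * ‖s₁ - s‖ := by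
  have hsub : t - s₁ = (t - s) - (s₁ - s) := by abel
  have hsq := norm_sub_sq_le_of_angle_le_pi_div_three hangle
  have hbound : ‖t - s₁‖ ≤ ‖t - s‖ - (2 - √3) * ‖s₁ - s‖ := by
    rw [hsub, ← sqrt_sq (norm_nonneg _)]
    exact (sqrt_le_sqrt hsq).trans (sqrt_sq_sub_mul_add_sq_le (norm_nonneg _) (by linarith))
  linarith

theorem stmt1 (s s₁ t : EuclideanSpace ℝ (Fin 2)) (h₀ : s₁ ≠ s)
    (hangle : InnerProductGeometry.angle (t - s) (s₁ - s) ≤ π / 3)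
    (hlen : ‖s₁ - s‖ ≤ ‖t - s‖ / 2) :
    ‖t - s‖ - ‖t - s₁‖ ≥ (2 - Real.sqrt 3) * ‖s₁ - s‖ :=
  stmt1_general s s₁ t hangle hlen
end

section
/- Let x₁ ≥ 0 with P(x₁ > r) = exp(-r² tan(θ/2)), let V be uniform on [0,1] independent of x₁, and set l₁ = x₁·sqrt(1 + tan²(θ/2)·V²). Then E(l₁)/E(x₁) = (1/2)·(1/cos(θ/2) + arcsinh(tan(θ/2))/tan(θ/2)). -/
open MeasureTheory ProbabilityTheory Real

/-!
Independence factorises `E[x · g(V)] = E[x] · E[g(V)]` with `g v = √(1 + tan²(θ/2) v²)`; `E[x]` is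
finite by the Gaussian tail and positive since `x > 0` a.s., so the ratio is `∫₀¹ g`. That integral is evaluated
with the antiderivative `½ (v √(1 + a² v²) + arsinh (a v) / a)`, and `√(1 + tan² t) = 1 / cos t`.
-/

lemma integral_sqrt_one_add_sq_mul_sq {a : ℝ} (ha : a ≠ 0) (b : ℝ) :
    ∫ v in (0 : ℝ)..b, √(1 + a ^ 2 * v ^ 2)
      = (1 / 2) * (b * √(1 + a ^ 2 * b ^ 2) + arsinh (a * b) / a) := by
  have hderiv (v : ℝ) : HasDerivAt
      (fun v ↦ (1 / 2) * (v * √(1 + a ^ 2 * v ^ 2) + arsinh (a * v) / a))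
      (√(1 + a ^ 2 * v ^ 2)) v := by
    have hpos : 0 < 1 + a ^ 2 * v ^ 2 := by positivity
    have hsqrt : HasDerivAt (fun v ↦ √(1 + a ^ 2 * v ^ 2))
        (1 / (2 * √(1 + a ^ 2 * v ^ 2)) * (a ^ 2 * (2 * v))) v := by
      refine (hasDerivAt_sqrt hpos.ne').comp v ?_
      simpa using ((hasDerivAt_pow 2 v).const_mul (a ^ 2)).const_add 1
    have harsinh : HasDerivAt (fun v ↦ arsinh (a * v)) ((√(1 + (a * v) ^ 2))⁻¹ * a) v :=
      (hasDerivAt_arsinh (a * v)).comp v (by simpa using (hasDerivAt_id v).const_mul a)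
    rw [mul_pow] at harsinh
    refine ((((hasDerivAt_id' v).mul hsqrt).add (harsinh.div_const a)).const_mul _).congr_deriv ?_
    have hs : √(1 + a ^ 2 * v ^ 2) ≠ 0 := (sqrt_pos.mpr hpos).ne'
    field_simp
    linear_combination -(sq_sqrt hpos.le)
  rw [intervalIntegral.integral_eq_sub_of_hasDerivAt (fun v _ ↦ hderiv v)
    (by apply Continuous.intervalIntegrable; fun_prop)]
  simp

lemma sqrt_one_add_tan_sq {t : ℝ} (ht : 0 < cos t) : √(1 + tan t ^ 2) = 1 / cos t := by
  rw [← inv_sqrt_one_add_tan_sq ht, one_div, inv_inv]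

lemma integrable_of_meas_lt_le {Ω : Type*} [MeasurableSpace Ω] {μ : Measure Ω} {X : Ω → ℝ}
    (hX : AEMeasurable X μ) (hX0 : 0 ≤ᵐ[μ] X) {f : ℝ → ℝ} (hf : IntegrableOn f (Set.Ioi 0))
    (htail : ∀ t > 0, μ {ω | t < X ω} ≤ ENNReal.ofReal (f t)) :
    Integrable X μ := by
  refine ⟨hX.aestronglyMeasurable, ?_⟩
  rw [hasFiniteIntegral_iff_ofReal hX0, lintegral_eq_lintegral_meas_lt μ hX0 hX]
  calc ∫⁻ t in Set.Ioi 0, μ {ω | t < X ω}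
      ≤ ∫⁻ t in Set.Ioi 0, ENNReal.ofReal (f t) :=
        setLIntegral_mono' measurableSet_Ioi htail
    _ < ⊤ := hf.lintegral_lt_top

lemma integral_comp_eq_intervalIntegral_of_map_eq {Ω : Type*} [MeasurableSpace Ω]
    {μ : Measure Ω} {V : Ω → ℝ} (hVm : AEMeasurable V μ) {a b : ℝ} (hab : a ≤ b)
    (hV : μ.map V = volume.restrict (Set.Icc a b)) {g : ℝ → ℝ} (hg : Measurable g) :
    ∫ ω, g (V ω) ∂μ = ∫ v in a..b, g v := by
  rw [← integral_map hVm hg.aestronglyMeasurable, hV, integral_Icc_eq_integral_Ioc,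
    intervalIntegral.integral_of_le hab]

theorem stmt5_general {Ω : Type*} [MeasurableSpace Ω] (μ : Measure Ω) [IsProbabilityMeasure μ]
    (θ : ℝ) (hθ : θ ∈ Set.Ioo 0 π) (x V : Ω → ℝ) (hxm : Measurable x)
    (hxlaw : ∀ r ≥ (0 : ℝ), μ {ω | r < x ω} =
      ENNReal.ofReal (Real.exp (-(r ^ 2 * Real.tan (θ / 2)))))
    (hVlaw : μ.map V = volume.restrict (Set.Icc (0 : ℝ) 1))
    (hindep : IndepFun x V μ) :
    (∫ ω, x ω * Real.sqrt (1 + Real.tan (θ / 2) ^ 2 * (V ω) ^ 2) ∂μ) / (∫ ω, x ω ∂μ)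
      = (1 / 2) * (1 / Real.cos (θ / 2) +
          Real.arsinh (Real.tan (θ / 2)) / Real.tan (θ / 2)) := by
  obtain ⟨hθ0, hθπ⟩ := hθ
  set a := tan (θ / 2)
  have hcos : 0 < cos (θ / 2) := cos_pos_of_mem_Ioo ⟨by linarith, by linarith⟩
  have ha : 0 < a := tan_pos_of_pos_of_lt_pi_div_two (by linarith) (by linarith)
  have hx_pos : μ {ω | 0 < x ω} = 1 := by simp [hxlaw 0 le_rfl]
  have hx_nonneg : 0 ≤ᵐ[μ] x :=
    ((ae_iff_prob_eq_one (measurable_const.lt hxm)).mpr hx_pos).mono fun _ ↦ le_of_lt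
  have hx_int : Integrable x μ := by
    refine integrable_of_meas_lt_le hxm.aemeasurable hx_nonneg
      (integrable_exp_neg_mul_sq ha).integrableOn fun t ht ↦ ?_
    rw [hxlaw t ht.le, mul_comm, neg_mul]
  have hEx_pos : 0 < ∫ ω, x ω ∂μ := by
    refine (integral_pos_iff_support_of_nonneg_ae hx_nonneg hx_int).mpr ?_
    calc 0 < μ {ω | 0 < x ω} := by simp [hx_pos]
      _ ≤ μ (Function.support x) := measure_mono fun _ h ↦ h.ne'
  have hg : Measurable fun v ↦ √(1 + a ^ 2 * v ^ 2) := by fun_prop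
  -- `Measure.map` along a map that is not a.e.-measurable is `0`, which the law of `V` is not.
  have hVm : AEMeasurable V μ := .of_map_ne_zero (by simp [hVlaw])
  have hfactor : ∫ ω, x ω * √(1 + a ^ 2 * V ω ^ 2) ∂μ
      = (∫ ω, x ω ∂μ) * ∫ ω, √(1 + a ^ 2 * V ω ^ 2) ∂μ :=
    (hindep.comp measurable_id hg).integral_fun_mul_eq_mul_integral
      hxm.aestronglyMeasurable (hg.comp_aemeasurable hVm).aestronglyMeasurable
  rw [hfactor, mul_div_cancel_left₀ _ hEx_pos.ne',
    integral_comp_eq_intervalIntegral_of_map_eq hVm zero_le_one hVlaw hg,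
    integral_sqrt_one_add_sq_mul_sq ha.ne']
  simp only [one_mul, one_pow, mul_one]
  rw [sqrt_one_add_tan_sq hcos]

theorem stmt5 {Ω : Type*} [MeasurableSpace Ω] (μ : Measure Ω) [IsProbabilityMeasure μ]
    (θ : ℝ) (hθ : θ ∈ Set.Ioo 0 π) (x V : Ω → ℝ) (hxm : Measurable x) (hVm : Measurable V)
    (hx : ∀ ω, 0 ≤ x ω)
    (hxlaw : ∀ r ≥ (0 : ℝ), μ {ω | r < x ω} =
      ENNReal.ofReal (Real.exp (-(r ^ 2 * Real.tan (θ / 2)))))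
    (hVlaw : μ.map V = volume.restrict (Set.Icc (0 : ℝ) 1))
    (hindep : IndepFun x V μ) :
    (∫ ω, x ω * Real.sqrt (1 + Real.tan (θ / 2) ^ 2 * (V ω) ^ 2) ∂μ) / (∫ ω, x ω ∂μ)
      = (1 / 2) * (1 / Real.cos (θ / 2) +
          Real.arsinh (Real.tan (θ / 2)) / Real.tan (θ / 2)) :=
  stmt5_general μ θ hθ x V hxm hxlaw hVlaw hindep
end

section
/- Let D ⊆ ℝ^d be open and G : D → ℝ^d Lipschitz with constant α and bounded by β. Let y_sol solve y(0) = z, y' = G(y) on [0, λ]. Let (a_n), (c_n) → 0 and let y_n : [0, λ + a_n] → D be continuous, piecewise linear between the points j·a_n for j = 0, …, ⌊λ/a_n⌋, with y_n(0) = z, and suppose for every such j, |(y_n((j+1)a_n) - y_n(j a_n))/a_n - G(y_n(j a_n))| ≤ c_n. Then there is a constant C_λ (one may take C_λ = λ e^λ (2 + αβ) + 3β) such that for n large enough, sup_{x ∈ [0,λ]} |y_n(x) - y_sol(x)| ≤ C_λ · max{a_n, c_n}. -/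
/-!
On each cell `[j a, (j + 1) a)` the polygon `y` is affine, so its right derivative at `t` is the
slope `s` of that cell. Since `‖s - G (y (j a))‖ ≤ c` and `‖y t - y (j a)‖ ≤ a ‖s‖ ≤ a (β + c)`,
the Lipschitz bound on `G` makes `y` an `(c + α a (β + c))`-approximate solution of `y' = G y`
on `[0, λ]`, starting where the exact solution does. Grönwall's comparison of approximate
trajectories then bounds `‖y - y_sol‖` on `[0, λ]` by `(c + α a (β + c)) λ e^{α λ}`, which is
`O(max a c)` as soon as `c ≤ 1`.
-/

open Filter Set NNReal

lemma Real.exp_sub_one_le_mul_exp (x : ℝ) : Real.exp x - 1 ≤ x * Real.exp x := by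
  have h := mul_le_mul_of_nonneg_right (Real.add_one_le_exp (-x)) (Real.exp_pos x).le
  rw [← Real.exp_add, neg_add_cancel, Real.exp_zero] at h
  linarith

lemma gronwallBound_zero_le {K ε : ℝ} (hK : 0 ≤ K) (hε : 0 ≤ ε) (x : ℝ) :
    gronwallBound 0 K ε x ≤ ε * x * Real.exp (K * x) := by
  rcases hK.eq_or_lt with rfl | hK
  · simp [gronwallBound_K0]
  · rw [gronwallBound_of_K_ne_0 hK.ne']
    calc 0 * Real.exp (K * x) + ε / K * (Real.exp (K * x) - 1)
        ≤ ε / K * (K * x * Real.exp (K * x)) := by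
          rw [zero_mul, zero_add]
          gcongr
          exact Real.exp_sub_one_le_mul_exp _
      _ = ε * x * Real.exp (K * x) := by field_simp

lemma mem_Ico_floor_div_mul {h t : ℝ} (hh : 0 < h) (ht : 0 ≤ t) :
    t ∈ Ico (⌊t / h⌋₊ * h) ((⌊t / h⌋₊ + 1) * h) :=
  ⟨(le_div_iff₀ hh).1 (Nat.floor_le (div_nonneg ht hh.le)),
    (div_lt_iff₀ hh).1 (Nat.lt_floor_add_one _)⟩

lemma norm_sub_le_of_lipschitzOnWith {E F : Type*} [SeminormedAddCommGroup E]
    [SeminormedAddCommGroup F] {D : Set E} {G : E → F} {α : ℝ≥0} {β c h : ℝ} {s : F} {u v : E}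
    (hG : LipschitzOnWith α G D) (hu : u ∈ D) (hv : v ∈ D) (hGu : ‖G u‖ ≤ β)
    (hs : ‖s - G u‖ ≤ c) (hvu : ‖v - u‖ ≤ h * ‖s‖) (hh : 0 ≤ h) :
    ‖s - G v‖ ≤ c + α * (h * (β + c)) := by
  have hs_le : ‖s‖ ≤ β + c := by
    calc ‖s‖ ≤ ‖G u‖ + ‖s - G u‖ := norm_le_insert' s (G u)
      _ ≤ β + c := add_le_add hGu hs
  have hGuv : ‖G u - G v‖ ≤ α * (h * (β + c)) := by
    rw [← dist_eq_norm]
    calc dist (G u) (G v) ≤ α * dist u v := hG.dist_le_mul u hu v hv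
      _ ≤ α * (h * (β + c)) := by
        rw [dist_comm, dist_eq_norm]
        gcongr
        exact hvu.trans (by gcongr)
  calc ‖s - G v‖ ≤ ‖s - G u‖ + ‖G u - G v‖ := norm_sub_le_norm_sub_add_norm_sub _ _ _
    _ ≤ c + α * (h * (β + c)) := add_le_add hs hGuv

section Polygon

variable {E : Type*} [NormedAddCommGroup E] [NormedSpace ℝ E]

lemma hasDerivWithinAt_Ici_of_eq_affine {f : ℝ → E} {p q h t : ℝ}
    (hf : ∀ x ∈ Icc p q, f x = f p + ((x - p) / h) • (f q - f p)) (ht : t ∈ Ico p q) :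
    HasDerivWithinAt f (h⁻¹ • (f q - f p)) (Ici t) t := by
  have hA : HasDerivAt (fun x => f p + ((x - p) / h) • (f q - f p)) (h⁻¹ • (f q - f p)) t := by
    simpa using ((((hasDerivAt_id t).sub_const p).div_const h).smul_const (f q - f p)).const_add
      (f p)
  refine hA.hasDerivWithinAt.congr_of_eventuallyEq ?_ (hf t (Ico_subset_Icc_self ht))
  filter_upwards [Ico_mem_nhdsGE_of_mem ⟨le_rfl, ht.2⟩] with x hx
  exact hf x ⟨ht.1.trans hx.1, hx.2.le⟩

lemma norm_sub_eq_of_eq_affine {f : ℝ → E} {p q h t : ℝ}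
    (hf : ∀ x ∈ Icc p q, f x = f p + ((x - p) / h) • (f q - f p)) (ht : t ∈ Icc p q) :
    ‖f t - f p‖ = (t - p) * ‖h⁻¹ • (f q - f p)‖ := by
  rw [hf t ht, add_sub_cancel_left, div_eq_mul_inv, mul_smul, norm_smul, Real.norm_eq_abs,
    abs_of_nonneg (sub_nonneg.2 ht.1)]

noncomputable def polygonSlope (y : ℝ → E) (h t : ℝ) : E :=
  h⁻¹ • (y ((⌊t / h⌋₊ + 1) * h) - y (⌊t / h⌋₊ * h))

variable {y : ℝ → E} {lam h : ℝ}

lemma hasDerivWithinAt_polygonSlope (hh : 0 < h)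
    (hlin : ∀ j : ℕ, j ≤ ⌊lam / h⌋₊ → ∀ x ∈ Icc ((j : ℝ) * h) (((j : ℝ) + 1) * h),
      y x = y (j * h) + ((x - j * h) / h) • (y ((j + 1) * h) - y (j * h)))
    {t : ℝ} (ht : t ∈ Ico 0 lam) :
    HasDerivWithinAt y (polygonSlope y h t) (Ici t) t :=
  hasDerivWithinAt_Ici_of_eq_affine
    (hlin _ (Nat.floor_le_floor (div_le_div_of_nonneg_right ht.2.le hh.le)))
    (mem_Ico_floor_div_mul hh ht.1)

lemma norm_polygonSlope_sub_le {D : Set E} {G : E → E} {α β : ℝ≥0} {c : ℝ}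
    (hG : LipschitzOnWith α G D) (hGb : ∀ x ∈ D, ‖G x‖ ≤ β) (hh : 0 < h)
    (hyD : ∀ x ∈ Icc 0 lam, y x ∈ D)
    (hlin : ∀ j : ℕ, j ≤ ⌊lam / h⌋₊ → ∀ x ∈ Icc ((j : ℝ) * h) (((j : ℝ) + 1) * h),
      y x = y (j * h) + ((x - j * h) / h) • (y ((j + 1) * h) - y (j * h)))
    (hslope : ∀ j : ℕ, j ≤ ⌊lam / h⌋₊ →
      ‖h⁻¹ • (y (((j : ℝ) + 1) * h) - y ((j : ℝ) * h)) - G (y ((j : ℝ) * h))‖ ≤ c)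
    {t : ℝ} (ht : t ∈ Ico 0 lam) :
    ‖polygonSlope y h t - G (y t)‖ ≤ c + α * (h * (β + c)) := by
  have hj : ⌊t / h⌋₊ ≤ ⌊lam / h⌋₊ :=
    Nat.floor_le_floor (div_le_div_of_nonneg_right ht.2.le hh.le)
  obtain ⟨hjt, htj⟩ := mem_Ico_floor_div_mul hh ht.1
  have hjD : y (⌊t / h⌋₊ * h) ∈ D := hyD _ ⟨by positivity, hjt.trans ht.2.le⟩
  refine norm_sub_le_of_lipschitzOnWith hG hjD (hyD t (Ico_subset_Icc_self ht)) (hGb _ hjD)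
    (hslope _ hj) ?_ hh.le
  rw [norm_sub_eq_of_eq_affine (hlin _ hj) ⟨hjt, htj.le⟩]
  exact mul_le_mul_of_nonneg_right (by linarith) (norm_nonneg _)

theorem norm_sub_le_of_polygon {D : Set E} {G : E → E} {α β : ℝ≥0} {c : ℝ}
    (hG : LipschitzOnWith α G D) (hGb : ∀ x ∈ D, ‖G x‖ ≤ β) {ysol : ℝ → E}
    (hsolD : ∀ x ∈ Icc 0 lam, ysol x ∈ D) (hsol : ∀ x ∈ Icc 0 lam, HasDerivAt ysol (G (ysol x)) x)
    (hh : 0 < h) (hc : 0 ≤ c) (hycont : ContinuousOn y (Icc 0 lam))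
    (hyD : ∀ x ∈ Icc 0 lam, y x ∈ D) (hy0 : y 0 = ysol 0)
    (hlin : ∀ j : ℕ, j ≤ ⌊lam / h⌋₊ → ∀ x ∈ Icc ((j : ℝ) * h) (((j : ℝ) + 1) * h),
      y x = y (j * h) + ((x - j * h) / h) • (y ((j + 1) * h) - y (j * h)))
    (hslope : ∀ j : ℕ, j ≤ ⌊lam / h⌋₊ →
      ‖h⁻¹ • (y (((j : ℝ) + 1) * h) - y ((j : ℝ) * h)) - G (y ((j : ℝ) * h))‖ ≤ c)
    {x : ℝ} (hx : x ∈ Icc 0 lam) :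
    ‖y x - ysol x‖ ≤ (c + α * (h * (β + c))) * (lam * Real.exp (α * lam)) := by
  have hgronwall := dist_le_of_approx_trajectories_ODE_of_mem (v := fun _ => G) (εg := 0)
    (fun _ _ => hG) hycont (fun t ht => hasDerivWithinAt_polygonSlope hh hlin ht)
    (fun t ht => (dist_eq_norm _ _).trans_le
      (norm_polygonSlope_sub_le hG hGb hh hyD hlin hslope ht))
    (fun t ht => hyD t (Ico_subset_Icc_self ht))
    (fun t ht => (hsol t ht).continuousAt.continuousWithinAt)
    (fun t ht => (hsol t (Ico_subset_Icc_self ht)).hasDerivWithinAt)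
    (fun t _ => (dist_self _).le) (fun t ht => hsolD t (Ico_subset_Icc_self ht))
    (by rw [hy0, dist_self]) x hx
  rw [dist_eq_norm, add_zero, sub_zero] at hgronwall
  obtain ⟨hx0, hxl⟩ := hx
  calc ‖y x - ysol x‖ ≤ (c + α * (h * (β + c))) * x * Real.exp (α * x) :=
        hgronwall.trans (gronwallBound_zero_le α.2 (by positivity) x)
    _ ≤ (c + α * (h * (β + c))) * (lam * Real.exp (α * lam)) := by
        have hlam : 0 ≤ lam := hx0.trans hxl
        rw [mul_assoc]
        gcongr

end Polygon

lemma add_mul_mul_add_le_mul_max {α β c h : ℝ} (hα : 0 ≤ α) (hβ : 0 ≤ β) (hc : 0 ≤ c)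
    (hc1 : c ≤ 1) : c + α * (h * (β + c)) ≤ (1 + α * (β + 1)) * max h c := by
  calc c + α * (h * (β + c)) ≤ max h c + α * (max h c * (β + 1)) := by
        gcongr
        exacts [le_max_right h c, le_max_left h c]
    _ = (1 + α * (β + 1)) * max h c := by ring

theorem stmt12_general {d : ℕ} (D : Set (EuclideanSpace ℝ (Fin d)))
    (G : EuclideanSpace ℝ (Fin d) → EuclideanSpace ℝ (Fin d)) (α β : NNReal)
    (hG : LipschitzOnWith α G D) (hGb : ∀ x ∈ D, ‖G x‖ ≤ β)
    (z : EuclideanSpace ℝ (Fin d)) (lam : ℝ)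
    (ysol : ℝ → EuclideanSpace ℝ (Fin d)) (hz0 : ysol 0 = z)
    (hsolD : ∀ x ∈ Set.Icc 0 lam, ysol x ∈ D)
    (hsol : ∀ x ∈ Set.Icc 0 lam, HasDerivAt ysol (G (ysol x)) x)
    (a c : ℕ → ℝ) (ha : ∀ n, 0 < a n) (hc : ∀ n, 0 ≤ c n)
    (hc0 : Tendsto c atTop (nhds 0))
    (y : ℕ → ℝ → EuclideanSpace ℝ (Fin d))
    (hycont : ∀ n, ContinuousOn (y n) (Set.Icc 0 (lam + a n)))
    (hyD : ∀ n, ∀ x ∈ Set.Icc 0 (lam + a n), y n x ∈ D)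
    (hy0 : ∀ n, y n 0 = z)
    (hlin : ∀ n, ∀ j : ℕ, j ≤ ⌊lam / a n⌋₊ →
      ∀ x ∈ Set.Icc ((j : ℝ) * a n) (((j : ℝ) + 1) * a n),
        y n x = y n ((j : ℝ) * a n) +
          ((x - (j : ℝ) * a n) / a n) • (y n (((j : ℝ) + 1) * a n) - y n ((j : ℝ) * a n)))
    (hslope : ∀ n, ∀ j : ℕ, j ≤ ⌊lam / a n⌋₊ →
      ‖(a n)⁻¹ • (y n (((j : ℝ) + 1) * a n) - y n ((j : ℝ) * a n)) -
        G (y n ((j : ℝ) * a n))‖ ≤ c n) :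
    ∃ C : ℝ, ∀ᶠ n in atTop, ∀ x ∈ Set.Icc 0 lam,
      ‖y n x - ysol x‖ ≤ C * max (a n) (c n) := by
  refine ⟨(1 + α * (β + 1)) * (lam * Real.exp (α * lam)), ?_⟩
  filter_upwards [hc0.eventually (ge_mem_nhds one_pos)] with n hc1 x hx
  have hIcc : Icc 0 lam ⊆ Icc 0 (lam + a n) :=
    Icc_subset_Icc_right (le_add_of_nonneg_right (ha n).le)
  calc ‖y n x - ysol x‖ ≤ (c n + α * (a n * (β + c n))) * (lam * Real.exp (α * lam)) :=
        norm_sub_le_of_polygon hG hGb hsolD hsol (ha n) (hc n) ((hycont n).mono hIcc)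
          (fun t ht => hyD n t (hIcc ht)) (by rw [hy0, hz0]) (hlin n) (hslope n) hx
    _ ≤ (1 + α * (β + 1)) * max (a n) (c n) * (lam * Real.exp (α * lam)) := by
        have hlam : 0 ≤ lam := hx.1.trans hx.2
        gcongr
        exact add_mul_mul_add_le_mul_max α.2 β.2 (hc n) hc1
    _ = (1 + α * (β + 1)) * (lam * Real.exp (α * lam)) * max (a n) (c n) := by ring

theorem stmt12 {d : ℕ} (D : Set (EuclideanSpace ℝ (Fin d))) (hD : IsOpen D)
    (G : EuclideanSpace ℝ (Fin d) → EuclideanSpace ℝ (Fin d)) (α β : NNReal)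
    (hG : LipschitzOnWith α G D) (hGb : ∀ x ∈ D, ‖G x‖ ≤ β)
    (z : EuclideanSpace ℝ (Fin d)) (lam : ℝ) (hlam : 0 < lam)
    (ysol : ℝ → EuclideanSpace ℝ (Fin d)) (hz0 : ysol 0 = z)
    (hsolD : ∀ x ∈ Set.Icc 0 lam, ysol x ∈ D)
    (hsol : ∀ x ∈ Set.Icc 0 lam, HasDerivAt ysol (G (ysol x)) x)
    (a c : ℕ → ℝ) (ha : ∀ n, 0 < a n) (hc : ∀ n, 0 ≤ c n)
    (ha0 : Tendsto a atTop (nhds 0)) (hc0 : Tendsto c atTop (nhds 0))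
    (y : ℕ → ℝ → EuclideanSpace ℝ (Fin d))
    (hycont : ∀ n, ContinuousOn (y n) (Set.Icc 0 (lam + a n)))
    (hyD : ∀ n, ∀ x ∈ Set.Icc 0 (lam + a n), y n x ∈ D)
    (hy0 : ∀ n, y n 0 = z)
    (hlin : ∀ n, ∀ j : ℕ, j ≤ ⌊lam / a n⌋₊ →
      ∀ x ∈ Set.Icc ((j : ℝ) * a n) (((j : ℝ) + 1) * a n),
        y n x = y n ((j : ℝ) * a n) +
          ((x - (j : ℝ) * a n) / a n) • (y n (((j : ℝ) + 1) * a n) - y n ((j : ℝ) * a n)))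
    (hslope : ∀ n, ∀ j : ℕ, j ≤ ⌊lam / a n⌋₊ →
      ‖(a n)⁻¹ • (y n (((j : ℝ) + 1) * a n) - y n ((j : ℝ) * a n)) -
        G (y n ((j : ℝ) * a n))‖ ≤ c n) :
    ∃ C : ℝ, ∀ᶠ n in atTop, ∀ x ∈ Set.Icc 0 lam,
      ‖y n x - ysol x‖ ≤ C * max (a n) (c n) :=
  stmt12_general D G α β hG hGb z lam ysol hz0 hsolD hsol a c ha hc hc0 y hycont hyD hy0 hlin hslope
end
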